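/- Let s₁, s₂ be the roots of s² + (μ₁ + μ₂ - λ)s + (μ₁,₂λ + μ₁μ₂ - λμ₁ - λμ₂) = 0 where μ₁,₂ = α₁μ₁ + α₂μ₂ and α₁ + α₂ = 1. Then s₁,₂ = ½[(λ - μ₁ - μ₂) ± √(μ₁² + μ₂² + λ² - 2μ₁μ₂ + 2λμ₁ + 2λμ₂ - 4μ₁,₂λ)], and the discriminant μ₁² + μ₂² + λ² - 2μ₁μ₂ + 2λμ₁ + 2λμ₂ - 4μ₁,₂λ is nonnegative whenever α₁, α₂ ∈ [0,1]. -/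
import Mathlib

theorem mg1_quadratic_roots
    (lam μ₁ μ₂ α₁ α₂ : ℝ) (hlam : 0 < lam) (hμ₂ : 0 < μ₂) (hμ : μ₂ < μ₁)
    (hα₁ : 0 ≤ α₁) (hα₂ : 0 ≤ α₂) (hα : α₁ + α₂ = 1) :
    let μ₁₂ := α₁ * μ₁ + α₂ * μ₂
    let disc := μ₁ ^ 2 + μ₂ ^ 2 + lam ^ 2 - 2 * μ₁ * μ₂ + 2 * lam * μ₁ +
      2 * lam * μ₂ - 4 * μ₁₂ * lam
    let s₁ := (1 / 2) * ((lam - μ₁ - μ₂) + Real.sqrt disc)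
    let s₂ := (1 / 2) * ((lam - μ₁ - μ₂) - Real.sqrt disc)
    0 ≤ disc ∧
    (s₁ ^ 2 + (μ₁ + μ₂ - lam) * s₁ +
      (μ₁₂ * lam + μ₁ * μ₂ - lam * μ₁ - lam * μ₂) = 0) ∧
    (s₂ ^ 2 + (μ₁ + μ₂ - lam) * s₂ +
      (μ₁₂ * lam + μ₁ * μ₂ - lam * μ₁ - lam * μ₂) = 0) := by
  intro μ₁₂ disc s₁ s₂
  have hd : 0 ≤ disc := by
    have h1 : disc = ((μ₁ - μ₂) + lam * (α₂ - α₁)) ^ 2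
        + lam ^ 2 * (1 - (α₂ - α₁) ^ 2) := by
      have h2 : α₂ = 1 - α₁ := by linarith
      simp only [disc, μ₁₂, h2]; ring
    rw [h1]
    have : (α₂ - α₁) ^ 2 ≤ 1 := by nlinarith
    nlinarith [sq_nonneg ((μ₁ - μ₂) + lam * (α₂ - α₁)), sq_nonneg lam]
  have hs : Real.sqrt disc ^ 2 = disc := Real.sq_sqrt hd
  refine ⟨hd, ?_, ?_⟩ <;>
  · simp only [s₁, s₂, disc, μ₁₂] at *
    nlinarith [hs]
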